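/- arXiv:1707.06196 — 5 statements merged into one kernel-verified Lean document; each statement's English description precedes it below -/
import Mathlib

section
/- Fix the MIBLP data as in the context. For any nonnegative upper-level pair (x^u, y^u) (x^u ∈ ℝ^{mR} with x^u ≥ 0, y^u a nonnegative integer vector in ℤ^{mZ}) and any nonnegative lower-level pair (x^{l0}, y^{l0}) (x^{l0} ∈ ℝ^{nR} with x^{l0} ≥ 0, y^{l0} a nonnegative integer vector in ℤ^{nZ}), the following are equivalent: (i) w_R·x^{l0} + w_Z·y^{l0} ≥ w_R·x + w_Z·y for every (x, y) ∈ Ω_{(x^u,y^u)}; (ii) for every nonnegative integer vector y ∈ ℤ^{nZ} such that there exists x ≥ 0 in ℝ^{nR} with P_R x ≤ s − Q_R x^u − Q_Z y^u − P_Z y (i.e. (x^u,y^u) ∈ Proj_{(x^u,y^u)} P(y)), there exist x ∈ ℝ^{nR} and π ∈ ℝ^{nL} with x ≥ 0, π ≥ 0 satisfying the KKT conditions for the inner LP at (x^u, y^u, y) and such that w_R·x^{l0} + w_Z·y^{l0} ≥ w_R·x + w_Z·y. -/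
/-!
For fixed `y`, dominance over every `x` completing `y` to a lower-level feasible point says that
the inner LP `max {w_R ⬝ᵥ x : P_R x ≤ b, x ≥ 0}` is bounded by `V - w_Z ⬝ᵥ y`, where `V` is the
value of `(xl0, yl0)`. A feasible bounded LP has a primal-dual pair without duality gap (strong
duality, from Farkas' lemma applied to the joint primal-dual system), and such a pair satisfies
complementary slackness; conversely, a KKT pair is primal optimal by weak duality.
Farkas' lemma is the separation theorem for proper cones, applied to a finitely generated cone;
such a cone is closed because Carathéodory's reduction writes it as a finite union of images of
the nonnegative orthant under injective linear maps.
-/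

open Matrix Finset

section ConicSpan

variable {E : Type*} [AddCommGroup E] [Module ℝ E] {ι : Type*}

def conicSpan (v : ι → E) (S : Finset ι) : Set E :=
  {x | ∃ c : ι → ℝ, 0 ≤ c ∧ ∑ i ∈ S, c i • v i = x}

theorem conicSpan_mono (v : ι → E) {S T : Finset ι} (hST : S ⊆ T) :
    conicSpan v S ⊆ conicSpan v T := by
  classical
  rintro _ ⟨c, hc, rfl⟩
  refine ⟨fun i => if i ∈ S then c i else 0, fun i => ?_, ?_⟩
  · by_cases hi : i ∈ S
    · simpa [hi] using hc i
    · simp [hi]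
  · rw [← Finset.sum_subset hST fun i _ hi => by simp [hi]]
    exact Finset.sum_congr rfl fun i hi => by simp [hi]

theorem conicSpan_eq_biUnion_erase [DecidableEq ι] {v : ι → E} {S : Finset ι}
    (hS : ¬LinearIndepOn ℝ v S) :
    conicSpan v S = ⋃ i ∈ S, conicSpan v (S.erase i) := by
  refine subset_antisymm ?_
    (Set.iUnion₂_subset fun i _ => conicSpan_mono v (S.erase_subset i))
  obtain ⟨g, hg, j, hjS, hj⟩ := not_linearIndepOn_finset_iff.1 hS
  wlog hgj : 0 < g j generalizing g
  · exact this (-g) (by simp [Finset.sum_neg_distrib, hg]) (by simpa using hj)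
      (by simpa using lt_of_le_of_ne (not_lt.1 hgj) hj)
  rintro _ ⟨c, hc, rfl⟩
  -- move along the relation `g` until the first coefficient `c k` hits zero
  obtain ⟨k, hkP, hk⟩ := (S.filter (0 < g ·)).exists_min_image (fun i => c i / g i)
    ⟨j, Finset.mem_filter.2 ⟨hjS, hgj⟩⟩
  obtain ⟨hkS, hgk⟩ := Finset.mem_filter.1 hkP
  set t := c k / g k
  have hck : c k - t * g k = 0 := by simp [t, div_mul_cancel₀ _ hgk.ne']
  refine Set.mem_biUnion hkS ⟨fun i => if i ∈ S then c i - t * g i else c i, fun i => ?_, ?_⟩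
  · by_cases hiS : i ∈ S
    · rcases lt_or_ge 0 (g i) with hgi | hgi
      · have := hk i (Finset.mem_filter.2 ⟨hiS, hgi⟩)
        rw [le_div_iff₀ hgi] at this
        simpa [hiS] using this
      · have htg : t * g i ≤ 0 := mul_nonpos_of_nonneg_of_nonpos (div_nonneg (hc k) hgk.le) hgi
        simpa [hiS] using (hc i).trans' htg
    · simpa [hiS] using hc i
  · calc ∑ i ∈ S.erase k, (if i ∈ S then c i - t * g i else c i) • v i
        = ∑ i ∈ S.erase k, (c i - t * g i) • v i :=
          Finset.sum_congr rfl fun i hi => by simp [Finset.mem_of_mem_erase hi]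
      _ = ∑ i ∈ S, (c i - t * g i) • v i :=
          Finset.sum_erase S (by rw [hck, zero_smul])
      _ = ∑ i ∈ S, c i • v i := by
          simp only [sub_smul, mul_smul, Finset.sum_sub_distrib, ← Finset.smul_sum, hg,
            smul_zero, sub_zero]

theorem conicSpan_univ_eq_image [Fintype ι] (v : ι → E) :
    conicSpan v univ = Fintype.linearCombination ℝ v '' Set.Ici 0 := by
  ext x
  simp [conicSpan, Fintype.linearCombination_apply]

variable [TopologicalSpace E] [IsTopologicalAddGroup E] [ContinuousSMul ℝ E] [T2Space E]

theorem isClosed_conicSpan_of_linearIndepOn {v : ι → E} {S : Finset ι}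
    (hS : LinearIndepOn ℝ v S) : IsClosed (conicSpan v S) := by
  classical
  set L := Fintype.linearCombination ℝ (fun i : S => v i)
  have hL : Topology.IsClosedEmbedding L :=
    L.isClosedEmbedding_of_injective (LinearMap.ker_eq_bot.2 hS.fintypeLinearCombination_injective)
  have hcone : conicSpan v S = L '' {c | 0 ≤ c} := by
    ext x
    constructor
    · rintro ⟨c, hc, rfl⟩
      exact ⟨fun i => c i, fun i => hc i, by
        simp [L, Fintype.linearCombination_apply, Finset.sum_attach S (fun i => c i • v i)]⟩
    · rintro ⟨c, hc, rfl⟩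
      refine ⟨fun i => if h : i ∈ S then c ⟨i, h⟩ else 0, fun i => ?_, ?_⟩
      · by_cases h : i ∈ S
        · simpa [h] using hc ⟨i, h⟩
        · simp [h]
      · rw [← Finset.sum_coe_sort]
        simp [L, Fintype.linearCombination_apply]
  rw [hcone]
  exact hL.isClosedMap _ (isClosed_le continuous_const continuous_id)

theorem isClosed_conicSpan (v : ι → E) (S : Finset ι) : IsClosed (conicSpan v S) := by
  classical
  induction S using Finset.strongInduction with
  | H S ih =>
    by_cases hS : LinearIndepOn ℝ v S
    · exact isClosed_conicSpan_of_linearIndepOn hS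
    · rw [conicSpan_eq_biUnion_erase hS]
      exact S.finite_toSet.isClosed_biUnion fun i hi => ih _ (S.erase_ssubset hi)

theorem mem_conicSpan_of_forall_dual [LocallyConvexSpace ℝ E] [Fintype ι] (v : ι → E) (b : E)
    (h : ∀ f : StrongDual ℝ E, (∀ i, 0 ≤ f (v i)) → 0 ≤ f b) : b ∈ conicSpan v univ := by
  classical
  by_contra hb
  let C : ProperCone ℝ E :=
    ⟨(PointedCone.positive ℝ (ι → ℝ)).map (Fintype.linearCombination ℝ v), by
      simpa [conicSpan_univ_eq_image] using isClosed_conicSpan v univ⟩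
  have hC : (C : Set E) = conicSpan v univ := by
    rw [conicSpan_univ_eq_image]
    exact PointedCone.coe_map _ _
  obtain ⟨f, hfC, hfb⟩ := C.hyperplane_separation_point (x₀ := b) (by rwa [← SetLike.mem_coe, hC])
  refine (h f fun i => hfC _ ?_).not_gt hfb
  rw [← SetLike.mem_coe, hC]
  exact ⟨Pi.single i 1, Pi.single_nonneg.2 zero_le_one, by simp [Pi.single_apply]⟩

end ConicSpan

namespace Matrix

variable {m n : Type*} [Fintype n]

theorem exists_nonneg_mulVec_le [Fintype m] (M : Matrix m n ℝ) (q : m → ℝ)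
    (h : ∀ y, 0 ≤ y → 0 ≤ Mᵀ *ᵥ y → 0 ≤ q ⬝ᵥ y) : ∃ u, 0 ≤ u ∧ M *ᵥ u ≤ q := by
  classical
  -- the columns of `M` together with the unit vectors (for the slack variables) generate the cone
  obtain ⟨c, hc, hcq⟩ := mem_conicSpan_of_forall_dual
    (Sum.elim (fun j i => M i j) fun i => Pi.single i 1) q fun f hf => by
      set y : m → ℝ := fun i => f (Pi.single i 1)
      have hfy : ∀ z, f z = y ⬝ᵥ z := fun z => by
        have hsingle : ∀ i : m, (fun j => if i = j then (1 : ℝ) else 0) = Pi.single i 1 :=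
          fun i => funext fun j => by simp [Pi.single_apply, @eq_comm _ i j]
        simpa [y, dotProduct, hsingle, mul_comm] using f.toLinearMap.pi_apply_eq_sum_univ z
      rw [hfy, dotProduct_comm]
      refine h y (fun i => by simpa using hf (Sum.inr i)) fun j => ?_
      simpa [hfy, mulVec, dotProduct, mul_comm] using hf (Sum.inl j)
  refine ⟨fun j => c (Sum.inl j), fun j => hc _, fun i => ?_⟩
  have := congrFun hcq i
  simp only [Fintype.sum_sum_type, Finset.sum_apply, Pi.smul_apply, Sum.elim_inl, Sum.elim_inr,
    Pi.single_apply, smul_eq_mul, mul_ite, mul_one, mul_zero, Finset.sum_ite_eq,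
    Finset.mem_univ, if_true] at this
  have hci : 0 ≤ c (Sum.inr i) := hc _
  simp only [mulVec, dotProduct]
  linarith [show ∑ j, c (Sum.inl j) * M i j = ∑ j, M i j * c (Sum.inl j) from
    Finset.sum_congr rfl fun j _ => mul_comm _ _]

theorem dotProduct_eq_zero_iff_of_nonneg {R : Type*} [Semiring R] [PartialOrder R]
    [IsOrderedRing R] {u v : n → R} (hu : 0 ≤ u) (hv : 0 ≤ v) :
    u ⬝ᵥ v = 0 ↔ ∀ i, u i * v i = 0 := by
  simpa [dotProduct] using
    Finset.sum_eq_zero_iff_of_nonneg (s := Finset.univ) fun i _ => mul_nonneg (hu i) (hv i)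

variable {A : Matrix m n ℝ} {b : m → ℝ} {w : n → ℝ}

theorem dotProduct_le_of_feasible [Fintype m] {x : n → ℝ} {π : m → ℝ} (hx : 0 ≤ x)
    (hAx : A *ᵥ x ≤ b) (hπ : 0 ≤ π) (hAπ : w ≤ Aᵀ *ᵥ π) : w ⬝ᵥ x ≤ b ⬝ᵥ π :=
  calc w ⬝ᵥ x ≤ (Aᵀ *ᵥ π) ⬝ᵥ x := dotProduct_le_dotProduct_of_nonneg_right hAπ hx
    _ = π ⬝ᵥ A *ᵥ x := by rw [mulVec_transpose, dotProduct_mulVec]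
    _ ≤ π ⬝ᵥ b := dotProduct_le_dotProduct_of_nonneg_left hAx hπ
    _ = b ⬝ᵥ π := dotProduct_comm _ _

theorem dotProduct_nonpos_of_recession {x₀ z : n → ℝ} {V : ℝ} (hx₀ : 0 ≤ x₀)
    (hAx₀ : A *ᵥ x₀ ≤ b) (hV : ∀ x, 0 ≤ x → A *ᵥ x ≤ b → w ⬝ᵥ x ≤ V) (hz : 0 ≤ z)
    (hAz : A *ᵥ z ≤ 0) : w ⬝ᵥ z ≤ 0 := by
  by_contra! hwz
  -- far enough along the ray `x₀ + τ z` the objective exceeds `V`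
  set τ := (V + 1 - w ⬝ᵥ x₀) / (w ⬝ᵥ z)
  have hτ : 0 ≤ τ := div_nonneg (by linarith [hV x₀ hx₀ hAx₀]) hwz.le
  have hfeas : A *ᵥ (x₀ + τ • z) ≤ b := by
    rw [mulVec_add, mulVec_smul]
    simpa using add_le_add hAx₀ (smul_nonpos_of_nonneg_of_nonpos hτ hAz)
  have := hV _ (add_nonneg hx₀ (smul_nonneg hτ hz)) hfeas
  rw [dotProduct_add, dotProduct_smul, smul_eq_mul, div_mul_cancel₀ _ hwz.ne'] at this
  linarith

theorem dotProduct_le_of_homogeneous_feasible [Fintype m] {x₀ z : n → ℝ} {y : m → ℝ} {t V : ℝ}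
    (hx₀ : 0 ≤ x₀) (hAx₀ : A *ᵥ x₀ ≤ b) (hV : ∀ x, 0 ≤ x → A *ᵥ x ≤ b → w ⬝ᵥ x ≤ V)
    (hz : 0 ≤ z) (hy : 0 ≤ y) (ht : 0 ≤ t) (hAz : A *ᵥ z ≤ t • b) (hAy : t • w ≤ Aᵀ *ᵥ y) :
    w ⬝ᵥ z ≤ b ⬝ᵥ y := by
  rcases ht.eq_or_lt with rfl | ht
  · rw [zero_smul] at hAz hAy
    have hwz := dotProduct_nonpos_of_recession hx₀ hAx₀ hV hz hAz
    have hby := dotProduct_le_of_feasible hx₀ hAx₀ hy hAy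
    rw [zero_dotProduct] at hby
    linarith
  · have := dotProduct_le_of_feasible hz hAz hy hAy
    rw [smul_dotProduct, smul_dotProduct, smul_eq_mul, smul_eq_mul] at this
    exact le_of_mul_le_mul_left this ht

/-- LP strong duality, proved by Farkas' lemma applied to the joint system
`A x ≤ b, Aᵀ π ≥ w, b ⬝ᵥ π ≤ w ⬝ᵥ x` in the unknowns `(x, π) ≥ 0`. -/
theorem exists_feasible_primal_dual_dotProduct_le [Fintype m] {x₀ : n → ℝ} {V : ℝ}
    (hx₀ : 0 ≤ x₀) (hAx₀ : A *ᵥ x₀ ≤ b) (hV : ∀ x, 0 ≤ x → A *ᵥ x ≤ b → w ⬝ᵥ x ≤ V) :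
    ∃ x π, 0 ≤ x ∧ 0 ≤ π ∧ A *ᵥ x ≤ b ∧ w ≤ Aᵀ *ᵥ π ∧ b ⬝ᵥ π ≤ w ⬝ᵥ x := by
  let M : Matrix (m ⊕ n ⊕ Unit) (n ⊕ m) ℝ := Matrix.of <| Sum.elim
    (fun k => Sum.elim (A k) 0)
    (Sum.elim (fun j => Sum.elim 0 fun k => -A k j) fun _ => Sum.elim (-w) b)
  have hcert : ∀ Y, 0 ≤ Y → 0 ≤ Mᵀ *ᵥ Y → 0 ≤ Sum.elim b (Sum.elim (-w) 0) ⬝ᵥ Y := by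
    intro Y hY hMY
    have := dotProduct_le_of_homogeneous_feasible hx₀ hAx₀ hV (z := fun j => Y (.inr (.inl j)))
      (y := fun k => Y (.inl k)) (t := Y (.inr (.inr ()))) (fun _ => hY _) (fun _ => hY _) (hY _)
      (fun k => by
        simpa [M, mulVec, dotProduct, Fintype.sum_sum_type, mul_comm] using hMY (.inr k))
      (fun j => by
        simpa [M, mulVec, dotProduct, Fintype.sum_sum_type, mul_comm] using hMY (.inl j))
    simpa [dotProduct, Fintype.sum_sum_type, mul_comm] using this
  obtain ⟨u, hu, hMu⟩ := exists_nonneg_mulVec_le M _ hcert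
  refine ⟨u ∘ Sum.inl, u ∘ Sum.inr, fun j => hu _, fun k => hu _, fun k => ?_, fun j => ?_, ?_⟩
  · simpa [M, mulVec, dotProduct, Fintype.sum_sum_type] using hMu (Sum.inl k)
  · simpa [M, mulVec, dotProduct, Fintype.sum_sum_type] using hMu (Sum.inr (Sum.inl j))
  · simpa [M, mulVec, dotProduct, Fintype.sum_sum_type] using hMu (Sum.inr (Sum.inr ()))

variable [Fintype m]

theorem duality_gap_eq_add_slackness (A : Matrix m n ℝ) (b : m → ℝ) (w x : n → ℝ) (π : m → ℝ) :
    b ⬝ᵥ π - w ⬝ᵥ x = x ⬝ᵥ (Aᵀ *ᵥ π - w) + π ⬝ᵥ (b - A *ᵥ x) := by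
  rw [dotProduct_sub, dotProduct_sub, mulVec_transpose, dotProduct_comm x (π ᵥ* A),
    ← dotProduct_mulVec, dotProduct_comm x w, dotProduct_comm π b]
  ring

structure IsKKTPair (A : Matrix m n ℝ) (b : m → ℝ) (w x : n → ℝ) (π : m → ℝ) : Prop where
  nonneg_primal : 0 ≤ x
  nonneg_dual : 0 ≤ π
  primal_feasible : A *ᵥ x ≤ b
  dual_feasible : w ≤ Aᵀ *ᵥ π
  primal_slackness : ∀ i, x i * ((Aᵀ *ᵥ π) i - w i) = 0
  dual_slackness : ∀ k, π k * (b k - (A *ᵥ x) k) = 0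

theorem isKKTPair_of_dotProduct_le {x : n → ℝ} {π : m → ℝ} (hx : 0 ≤ x) (hπ : 0 ≤ π)
    (hAx : A *ᵥ x ≤ b) (hAπ : w ≤ Aᵀ *ᵥ π) (hgap : b ⬝ᵥ π ≤ w ⬝ᵥ x) : IsKKTPair A b w x π := by
  have hprimal := dotProduct_nonneg_of_nonneg hx (sub_nonneg.2 hAπ)
  have hdual := dotProduct_nonneg_of_nonneg hπ (sub_nonneg.2 hAx)
  have hsum := duality_gap_eq_add_slackness A b w x π
  exact ⟨hx, hπ, hAx, hAπ,
    (dotProduct_eq_zero_iff_of_nonneg hx (sub_nonneg.2 hAπ)).1 (by linarith),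
    (dotProduct_eq_zero_iff_of_nonneg hπ (sub_nonneg.2 hAx)).1 (by linarith)⟩

namespace IsKKTPair

variable {x : n → ℝ} {π : m → ℝ}

theorem dotProduct_eq (h : IsKKTPair A b w x π) : w ⬝ᵥ x = b ⬝ᵥ π := by
  have hprimal : x ⬝ᵥ (Aᵀ *ᵥ π - w) = 0 := Finset.sum_eq_zero fun i _ => h.primal_slackness i
  have hdual : π ⬝ᵥ (b - A *ᵥ x) = 0 := Finset.sum_eq_zero fun k _ => h.dual_slackness k
  linarith [duality_gap_eq_add_slackness A b w x π]

theorem le_of_feasible (h : IsKKTPair A b w x π) {x' : n → ℝ} (hx' : 0 ≤ x')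
    (hAx' : A *ᵥ x' ≤ b) : w ⬝ᵥ x' ≤ w ⬝ᵥ x :=
  (dotProduct_le_of_feasible hx' hAx' h.nonneg_dual h.dual_feasible).trans_eq h.dotProduct_eq.symm

end IsKKTPair

theorem exists_isKKTPair {x₀ : n → ℝ} {V : ℝ} (hx₀ : 0 ≤ x₀) (hAx₀ : A *ᵥ x₀ ≤ b)
    (hV : ∀ x, 0 ≤ x → A *ᵥ x ≤ b → w ⬝ᵥ x ≤ V) : ∃ x π, IsKKTPair A b w x π := by
  obtain ⟨x, π, hx, hπ, hAx, hAπ, hgap⟩ := exists_feasible_primal_dual_dotProduct_le hx₀ hAx₀ hV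
  exact ⟨x, π, isKKTPair_of_dotProduct_le hx hπ hAx hAπ hgap⟩

end Matrix

theorem stmt_0_general
    (mR mZ nR nZ nL : ℕ)
    (Q_R : Matrix (Fin nL) (Fin mR) ℝ) (Q_Z : Matrix (Fin nL) (Fin mZ) ℝ)
    (P_R : Matrix (Fin nL) (Fin nR) ℝ) (P_Z : Matrix (Fin nL) (Fin nZ) ℝ)
    (w_R : Fin nR → ℝ) (w_Z : Fin nZ → ℝ) (s : Fin nL → ℝ)
    (xu : Fin mR → ℝ) (yu : Fin mZ → ℤ)
    (xl0 : Fin nR → ℝ) (yl0 : Fin nZ → ℤ) :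
    (∀ (x : Fin nR → ℝ) (y : Fin nZ → ℤ), 0 ≤ x → 0 ≤ y →
        P_R *ᵥ x + P_Z *ᵥ (fun i => (y i : ℝ)) ≤
          s - Q_R *ᵥ xu - Q_Z *ᵥ (fun i => (yu i : ℝ)) →
        w_R ⬝ᵥ x + w_Z ⬝ᵥ (fun i => (y i : ℝ)) ≤
          w_R ⬝ᵥ xl0 + w_Z ⬝ᵥ (fun i => (yl0 i : ℝ)))
    ↔
    (∀ y : Fin nZ → ℤ, 0 ≤ y →
        (∃ x : Fin nR → ℝ, 0 ≤ x ∧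
          P_R *ᵥ x ≤ s - Q_R *ᵥ xu - Q_Z *ᵥ (fun i => (yu i : ℝ))
            - P_Z *ᵥ (fun i => (y i : ℝ))) →
        ∃ (x : Fin nR → ℝ) (π : Fin nL → ℝ), 0 ≤ x ∧ 0 ≤ π ∧
          P_R *ᵥ x ≤ s - Q_R *ᵥ xu - Q_Z *ᵥ (fun i => (yu i : ℝ))
            - P_Z *ᵥ (fun i => (y i : ℝ)) ∧
          w_R ≤ P_Rᵀ *ᵥ π ∧
          (∀ i, x i * ((P_Rᵀ *ᵥ π) i - w_R i) = 0) ∧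
          (∀ k, π k * ((s - Q_R *ᵥ xu - Q_Z *ᵥ (fun i => (yu i : ℝ))
            - P_Z *ᵥ (fun i => (y i : ℝ))) k - (P_R *ᵥ x) k) = 0) ∧
          w_R ⬝ᵥ x + w_Z ⬝ᵥ (fun i => (y i : ℝ)) ≤
            w_R ⬝ᵥ xl0 + w_Z ⬝ᵥ (fun i => (yl0 i : ℝ))) := by
  have hfeas : ∀ (x : Fin nR → ℝ) (y : Fin nZ → ℤ),
      P_R *ᵥ x ≤ s - Q_R *ᵥ xu - Q_Z *ᵥ (fun i => (yu i : ℝ)) - P_Z *ᵥ (fun i => (y i : ℝ)) ↔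
        P_R *ᵥ x + P_Z *ᵥ (fun i => (y i : ℝ)) ≤ s - Q_R *ᵥ xu - Q_Z *ᵥ (fun i => (yu i : ℝ)) :=
    fun _ _ => le_sub_iff_add_le
  constructor
  · rintro hopt y hy ⟨x₀, hx₀, hAx₀⟩
    obtain ⟨x, π, h⟩ := Matrix.exists_isKKTPair hx₀ hAx₀
      fun x hx hAx => le_sub_iff_add_le.2 (hopt x y hx hy ((hfeas x y).1 hAx))
    exact ⟨x, π, h.nonneg_primal, h.nonneg_dual, h.primal_feasible, h.dual_feasible,
      h.primal_slackness, h.dual_slackness,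
      hopt x y h.nonneg_primal hy ((hfeas x y).1 h.primal_feasible)⟩
  · intro hkkt x y hx hy hAx
    obtain ⟨x', π, hx', hπ, hAx', hAπ, hslack, hslack', hval⟩ :=
      hkkt y hy ⟨x, hx, (hfeas x y).2 hAx⟩
    have := Matrix.IsKKTPair.le_of_feasible ⟨hx', hπ, hAx', hAπ, hslack, hslack'⟩ hx
      ((hfeas x y).2 hAx)
    linarith

/-- equivalence between lower-level optimality of `(xl0, yl0)`
(value dominance over the whole lower-level feasible region) and the
projection-guarded KKT formulation. -/
theorem stmt_0
    (mR mZ nR nZ nL : ℕ)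
    (Q_R : Matrix (Fin nL) (Fin mR) ℝ) (Q_Z : Matrix (Fin nL) (Fin mZ) ℝ)
    (P_R : Matrix (Fin nL) (Fin nR) ℝ) (P_Z : Matrix (Fin nL) (Fin nZ) ℝ)
    (w_R : Fin nR → ℝ) (w_Z : Fin nZ → ℝ) (s : Fin nL → ℝ)
    (xu : Fin mR → ℝ) (yu : Fin mZ → ℤ)
    (xl0 : Fin nR → ℝ) (yl0 : Fin nZ → ℤ)
    (hxu : 0 ≤ xu) (hyu : 0 ≤ yu) (hxl0 : 0 ≤ xl0) (hyl0 : 0 ≤ yl0) :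
    (∀ (x : Fin nR → ℝ) (y : Fin nZ → ℤ), 0 ≤ x → 0 ≤ y →
        P_R *ᵥ x + P_Z *ᵥ (fun i => (y i : ℝ)) ≤
          s - Q_R *ᵥ xu - Q_Z *ᵥ (fun i => (yu i : ℝ)) →
        w_R ⬝ᵥ x + w_Z ⬝ᵥ (fun i => (y i : ℝ)) ≤
          w_R ⬝ᵥ xl0 + w_Z ⬝ᵥ (fun i => (yl0 i : ℝ)))
    ↔
    (∀ y : Fin nZ → ℤ, 0 ≤ y →
        (∃ x : Fin nR → ℝ, 0 ≤ x ∧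
          P_R *ᵥ x ≤ s - Q_R *ᵥ xu - Q_Z *ᵥ (fun i => (yu i : ℝ))
            - P_Z *ᵥ (fun i => (y i : ℝ))) →
        ∃ (x : Fin nR → ℝ) (π : Fin nL → ℝ), 0 ≤ x ∧ 0 ≤ π ∧
          P_R *ᵥ x ≤ s - Q_R *ᵥ xu - Q_Z *ᵥ (fun i => (yu i : ℝ))
            - P_Z *ᵥ (fun i => (y i : ℝ)) ∧
          w_R ≤ P_Rᵀ *ᵥ π ∧
          (∀ i, x i * ((P_Rᵀ *ᵥ π) i - w_R i) = 0) ∧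
          (∀ k, π k * ((s - Q_R *ᵥ xu - Q_Z *ᵥ (fun i => (yu i : ℝ))
            - P_Z *ᵥ (fun i => (y i : ℝ))) k - (P_R *ᵥ x) k) = 0) ∧
          w_R ⬝ᵥ x + w_Z ⬝ᵥ (fun i => (y i : ℝ)) ≤
            w_R ⬝ᵥ xl0 + w_Z ⬝ᵥ (fun i => (yl0 i : ℝ))) :=
  stmt_0_general mR mZ nR nZ nL Q_R Q_Z P_R P_Z w_R w_Z s xu yu xl0 yl0
end

section
/- Fix the MIBLP data as in the context. Every point of the inducible region IR is feasible to the master problem for any index set: if (x^u, y^u, x^{l0}, y^{l0}) ∈ IR, then for every nonnegative integer vector y ∈ ℤ^{nZ} with (x^u,y^u) ∈ Proj_{(x^u,y^u)} P(y), there exist x ∈ ℝ^{nR}, π ∈ ℝ^{nL}, x ≥ 0, π ≥ 0, satisfying the KKT conditions for the inner LP at (x^u, y^u, y) together with w_R·x^{l0} + w_Z·y^{l0} ≥ w_R·x + w_Z·y. In particular, if IR is nonempty then the master feasible set F(Y') is nonempty for every set Y' of nonnegative integer vectors in ℤ^{nZ}. -/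
open Matrix

noncomputable section

/-- Coercion of an integer vector into real space. -/
def cRv {n : ℕ} (y : Fin n → ℤ) : Fin n → ℝ := fun i => (y i : ℝ)

variable {mR mZ nR nZ nU nL : ℕ}

/-- The MIBLP constraint region Ω. -/
def OmegaSet (A_R : Matrix (Fin nU) (Fin mR) ℝ) (A_Z : Matrix (Fin nU) (Fin mZ) ℝ)
    (B_R : Matrix (Fin nU) (Fin nR) ℝ) (B_Z : Matrix (Fin nU) (Fin nZ) ℝ)
    (Q_R : Matrix (Fin nL) (Fin mR) ℝ) (Q_Z : Matrix (Fin nL) (Fin mZ) ℝ)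
    (P_R : Matrix (Fin nL) (Fin nR) ℝ) (P_Z : Matrix (Fin nL) (Fin nZ) ℝ)
    (r : Fin nU → ℝ) (s : Fin nL → ℝ) :
    Set ((Fin mR → ℝ) × (Fin mZ → ℤ) × (Fin nR → ℝ) × (Fin nZ → ℤ)) :=
  {p | 0 ≤ p.1 ∧ 0 ≤ p.2.1 ∧ 0 ≤ p.2.2.1 ∧ 0 ≤ p.2.2.2 ∧
    A_R *ᵥ p.1 + A_Z *ᵥ cRv p.2.1 + B_R *ᵥ p.2.2.1 + B_Z *ᵥ cRv p.2.2.2 ≤ r ∧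
    Q_R *ᵥ p.1 + Q_Z *ᵥ cRv p.2.1 + P_R *ᵥ p.2.2.1 + P_Z *ᵥ cRv p.2.2.2 ≤ s}

/-- The lower-level feasible region Ω_{(x^u,y^u)}. -/
def LowerFeas (Q_R : Matrix (Fin nL) (Fin mR) ℝ) (Q_Z : Matrix (Fin nL) (Fin mZ) ℝ)
    (P_R : Matrix (Fin nL) (Fin nR) ℝ) (P_Z : Matrix (Fin nL) (Fin nZ) ℝ)
    (s : Fin nL → ℝ) (xu : Fin mR → ℝ) (yu : Fin mZ → ℤ) :
    Set ((Fin nR → ℝ) × (Fin nZ → ℤ)) :=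
  {q | 0 ≤ q.1 ∧ 0 ≤ q.2 ∧
    P_R *ᵥ q.1 + P_Z *ᵥ cRv q.2 ≤ s - Q_R *ᵥ xu - Q_Z *ᵥ cRv yu}

/-- The inducible region IR. -/
def IRset (A_R : Matrix (Fin nU) (Fin mR) ℝ) (A_Z : Matrix (Fin nU) (Fin mZ) ℝ)
    (B_R : Matrix (Fin nU) (Fin nR) ℝ) (B_Z : Matrix (Fin nU) (Fin nZ) ℝ)
    (Q_R : Matrix (Fin nL) (Fin mR) ℝ) (Q_Z : Matrix (Fin nL) (Fin mZ) ℝ)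
    (P_R : Matrix (Fin nL) (Fin nR) ℝ) (P_Z : Matrix (Fin nL) (Fin nZ) ℝ)
    (w_R : Fin nR → ℝ) (w_Z : Fin nZ → ℝ) (r : Fin nU → ℝ) (s : Fin nL → ℝ) :
    Set ((Fin mR → ℝ) × (Fin mZ → ℤ) × (Fin nR → ℝ) × (Fin nZ → ℤ)) :=
  {p | p ∈ OmegaSet A_R A_Z B_R B_Z Q_R Q_Z P_R P_Z r s ∧
    (p.2.2.1, p.2.2.2) ∈ LowerFeas Q_R Q_Z P_R P_Z s p.1 p.2.1 ∧
    ∀ q ∈ LowerFeas Q_R Q_Z P_R P_Z s p.1 p.2.1,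
      w_R ⬝ᵥ q.1 + w_Z ⬝ᵥ cRv q.2 ≤ w_R ⬝ᵥ p.2.2.1 + w_Z ⬝ᵥ cRv p.2.2.2}

/-- Membership of (x^u,y^u) in Proj_{(x^u,y^u)} P(y). -/
def ProjMem (Q_R : Matrix (Fin nL) (Fin mR) ℝ) (Q_Z : Matrix (Fin nL) (Fin mZ) ℝ)
    (P_R : Matrix (Fin nL) (Fin nR) ℝ) (P_Z : Matrix (Fin nL) (Fin nZ) ℝ)
    (s : Fin nL → ℝ) (xu : Fin mR → ℝ) (yu : Fin mZ → ℤ) (y : Fin nZ → ℤ) : Prop :=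
  0 ≤ xu ∧ 0 ≤ yu ∧ 0 ≤ y ∧
    ∃ x : Fin nR → ℝ, 0 ≤ x ∧
      Q_R *ᵥ xu + Q_Z *ᵥ cRv yu + P_R *ᵥ x ≤ s - P_Z *ᵥ cRv y

/-- KKT conditions for the inner LP max{w_R·x : P_R x ≤ b, x ≥ 0},
where b = s − Q_R x^u − Q_Z y^u − P_Z y. -/
def KKTcond (Q_R : Matrix (Fin nL) (Fin mR) ℝ) (Q_Z : Matrix (Fin nL) (Fin mZ) ℝ)
    (P_R : Matrix (Fin nL) (Fin nR) ℝ) (P_Z : Matrix (Fin nL) (Fin nZ) ℝ)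
    (w_R : Fin nR → ℝ) (s : Fin nL → ℝ)
    (xu : Fin mR → ℝ) (yu : Fin mZ → ℤ) (y : Fin nZ → ℤ)
    (x : Fin nR → ℝ) (π : Fin nL → ℝ) : Prop :=
  0 ≤ x ∧ 0 ≤ π ∧
  P_R *ᵥ x ≤ s - Q_R *ᵥ xu - Q_Z *ᵥ cRv yu - P_Z *ᵥ cRv y ∧
  w_R ≤ P_Rᵀ *ᵥ π ∧
  (∀ i, x i * ((P_Rᵀ *ᵥ π) i - w_R i) = 0) ∧
  (∀ k, π k * ((s - Q_R *ᵥ xu - Q_Z *ᵥ cRv yu - P_Z *ᵥ cRv y) k - (P_R *ᵥ x) k) = 0)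

/-- The master feasible set F(Y): tuples in Ω satisfying the guarded KKT
constraint for every lower-level integer vector in Y. -/
def MasterFeas (A_R : Matrix (Fin nU) (Fin mR) ℝ) (A_Z : Matrix (Fin nU) (Fin mZ) ℝ)
    (B_R : Matrix (Fin nU) (Fin nR) ℝ) (B_Z : Matrix (Fin nU) (Fin nZ) ℝ)
    (Q_R : Matrix (Fin nL) (Fin mR) ℝ) (Q_Z : Matrix (Fin nL) (Fin mZ) ℝ)
    (P_R : Matrix (Fin nL) (Fin nR) ℝ) (P_Z : Matrix (Fin nL) (Fin nZ) ℝ)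
    (w_R : Fin nR → ℝ) (w_Z : Fin nZ → ℝ) (r : Fin nU → ℝ) (s : Fin nL → ℝ)
    (Y : Set (Fin nZ → ℤ)) :
    Set ((Fin mR → ℝ) × (Fin mZ → ℤ) × (Fin nR → ℝ) × (Fin nZ → ℤ)) :=
  {p | p ∈ OmegaSet A_R A_Z B_R B_Z Q_R Q_Z P_R P_Z r s ∧
    ∀ y ∈ Y, ProjMem Q_R Q_Z P_R P_Z s p.1 p.2.1 y →
      ∃ (x : Fin nR → ℝ) (π : Fin nL → ℝ),
        KKTcond Q_R Q_Z P_R P_Z w_R s p.1 p.2.1 y x π ∧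
        w_R ⬝ᵥ x + w_Z ⬝ᵥ cRv y ≤ w_R ⬝ᵥ p.2.2.1 + w_Z ⬝ᵥ cRv p.2.2.2}


/-!
Fix a point of the inducible region and an admissible lower-level integer vector `y`. The
continuous part of the lower level, `max {w_R ⬝ᵥ x : P_R x ≤ b, x ≥ 0}` with
`b = s - Q_R x^u - Q_Z y^u - P_Z y`, is feasible by the projection condition, and it is bounded
above by `w_R ⬝ᵥ x^{l0} + w_Z ⬝ᵥ y^{l0} - w_Z ⬝ᵥ y` because `(x, y)` is lower-level feasible
whenever `x` is feasible for it. LP strong duality gives a primal–dual pair with equal objective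
values; by complementary slackness it satisfies the KKT conditions, and its primal part obeys
the value-function inequality for the same reason as every feasible `x`.

Strong duality follows from Farkas' lemma, i.e. from the separation theorem for closed convex
cones, once one knows that finitely generated cones are closed. That last fact rests on the conic
Carathéodory theorem: every point of the cone is a nonnegative combination of linearly
independent generators, and the cone generated by independent vectors is the image of a
nonnegative orthant under a closed embedding.
-/

section NonnegOrthant

variable {ι : Type*} [Fintype ι]

theorem exists_add_smul_nonneg_support_ssubset_of_pos {c g : ι → ℝ} (hc : 0 ≤ c)
    (hg : g.support ⊆ c.support) (hpos : ∃ i, 0 < g i) :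
    ∃ t : ℝ, 0 ≤ c + t • g ∧ (c + t • g).support ⊂ c.support := by
  classical
  obtain ⟨i₀, hi₀, hmin⟩ := (Finset.univ.filter fun i => 0 < g i).exists_min_image
    (fun i => c i / g i) (by simpa [Finset.filter_nonempty_iff] using hpos)
  simp only [Finset.mem_filter, Finset.mem_univ, true_and] at hi₀ hmin
  have hratio : 0 ≤ c i₀ / g i₀ := div_nonneg (hc i₀) hi₀.le
  refine ⟨-(c i₀ / g i₀), fun i => ?_, ?_⟩
  · simp only [Pi.zero_apply, Pi.add_apply, Pi.smul_apply, smul_eq_mul]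
    rcases le_or_gt (g i) 0 with h | h
    · have hci : 0 ≤ c i := hc i
      nlinarith [mul_nonneg hratio (neg_nonneg.2 h)]
    · have := (le_div_iff₀ h).1 (hmin i h)
      linarith
  · have hsub : (c + -(c i₀ / g i₀) • g).support ⊆ c.support := fun i hi => by
      by_contra hci
      have hgi : g i = 0 := Function.notMem_support.1 fun h => hci (hg h)
      simp_all
    refine (Set.ssubset_iff_of_subset hsub).2 ⟨i₀, hg hi₀.ne', ?_⟩
    simp [Function.mem_support, hi₀.ne']

theorem exists_add_smul_nonneg_support_ssubset {c g : ι → ℝ} (hc : 0 ≤ c)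
    (hg : g.support ⊆ c.support) (hg₀ : g ≠ 0) :
    ∃ t : ℝ, 0 ≤ c + t • g ∧ (c + t • g).support ⊂ c.support := by
  obtain ⟨i, hi⟩ := Function.ne_iff.1 hg₀
  rcases lt_or_gt_of_ne hi with hneg | hpos
  · obtain ⟨t, ht⟩ := exists_add_smul_nonneg_support_ssubset_of_pos (g := -g) hc
      (by rwa [Function.support_neg]) ⟨i, by simpa using hneg⟩
    exact ⟨-t, by simpa using ht⟩
  · exact exists_add_smul_nonneg_support_ssubset_of_pos hc hg ⟨i, hpos⟩

variable {E : Type*} [AddCommGroup E] [Module ℝ E]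

/-- Conic Carathéodory: a representation of minimal support uses independent generators. -/
theorem LinearMap.exists_nonneg_eq_and_injective_on_support (f : (ι → ℝ) →ₗ[ℝ] E)
    {c : ι → ℝ} (hc : 0 ≤ c) :
    ∃ c', 0 ≤ c' ∧ f c' = f c ∧ ∀ g, f g = 0 → g.support ⊆ c'.support → g = 0 := by
  obtain ⟨c', ⟨hc'₀, hc'⟩, hmin⟩ := (measure fun c : ι → ℝ => c.support.ncard).wf.has_min
    {c' | 0 ≤ c' ∧ f c' = f c} ⟨c, hc, rfl⟩
  refine ⟨c', hc'₀, hc', fun g hfg hg => by_contra fun hg₀ => ?_⟩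
  obtain ⟨t, ht, hss⟩ := exists_add_smul_nonneg_support_ssubset hc'₀ hg hg₀
  exact hmin _ ⟨ht, by simp [hfg, hc']⟩ (Set.ncard_lt_ncard hss)

theorem LinearMap.isClosed_image_Ici_zero [TopologicalSpace E] [IsTopologicalAddGroup E]
    [ContinuousSMul ℝ E] [T2Space E] (f : (ι → ℝ) →ₗ[ℝ] E) : IsClosed (f '' Set.Ici 0) := by
  let W (S : Set ι) : Submodule ℝ (ι → ℝ) := Submodule.pi Sᶜ fun _ => ⊥
  have mem_W (S : Set ι) (c : ι → ℝ) : c ∈ W S ↔ c.support ⊆ S := by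
    simp only [W, Submodule.mem_pi, Set.mem_compl_iff, Submodule.mem_bot,
      Function.support_subset_iff']
  have hcover : f '' Set.Ici 0 = ⋃ (S : Set ι) (_ : LinearMap.ker (f.domRestrict (W S)) = ⊥),
      f.domRestrict (W S) '' {w | 0 ≤ (w : ι → ℝ)} := by
    ext x
    simp only [Set.mem_image, Set.mem_iUnion, Set.mem_ofPred_eq, Set.mem_Ici]
    constructor
    · rintro ⟨c, hc, rfl⟩
      obtain ⟨c', hc'₀, hc', hinj⟩ := f.exists_nonneg_eq_and_injective_on_support hc
      exact ⟨c'.support, LinearMap.ker_eq_bot'.2 fun g hg =>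
        Subtype.ext (hinj g hg ((mem_W _ _).1 g.2)), ⟨c', (mem_W _ _).2 subset_rfl⟩, hc'₀, hc'⟩
    · rintro ⟨S, -, w, hw, rfl⟩
      exact ⟨w, hw, rfl⟩
  rw [hcover]
  refine isClosed_iUnion_of_finite fun S => isClosed_iUnion_of_finite fun hS => ?_
  exact (LinearMap.isClosedEmbedding_of_injective hS).isClosedMap _
    (isClosed_le continuous_const continuous_subtype_val)

end NonnegOrthant

theorem mul_eq_zero_of_dotProduct_eq_zero {n R : Type*} [Fintype n] [Semiring R] [PartialOrder R]
    [IsOrderedRing R] {v w : n → R} (hv : 0 ≤ v) (hw : 0 ≤ w) (h : v ⬝ᵥ w = 0) (i : n) :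
    v i * w i = 0 :=
  (Finset.sum_eq_zero_iff_of_nonneg fun j _ => mul_nonneg (hv j) (hw j)).1 h i (Finset.mem_univ i)

section Farkas

variable {m n : Type*} [Fintype m] [Fintype n]

theorem Matrix.exists_vecMul_nonneg_dotProduct_neg (A : Matrix m n ℝ) {b : m → ℝ}
    (hb : ∀ x, 0 ≤ x → A *ᵥ x ≠ b) : ∃ y, 0 ≤ y ᵥ* A ∧ y ⬝ᵥ b < 0 := by
  classical
  let C : ProperCone ℝ (m → ℝ) :=
    { toSubmodule := (PointedCone.positive ℝ (n → ℝ)).map (A.mulVecLin.restrictScalars _)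
      isClosed' := by simpa using A.mulVecLin.isClosed_image_Ici_zero }
  obtain ⟨f, hfC, hfb⟩ := C.hyperplane_separation_point (x₀ := b) (by simpa [C] using hb)
  set y : m → ℝ := fun i => f (Pi.single i 1)
  have hf (z : m → ℝ) : f z = y ⬝ᵥ z := by
    rw [← ContinuousLinearMap.coe_coe, LinearMap.pi_apply_eq_sum_univ, dotProduct]
    refine Finset.sum_congr rfl fun i _ => ?_
    have hsingle : (fun j => if i = j then (1 : ℝ) else 0) = Pi.single i 1 := by
      ext j
      simp [Pi.single_apply, eq_comm]
    rw [smul_eq_mul, mul_comm, hsingle]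
    rfl
  refine ⟨y, fun j => ?_, by rwa [← hf]⟩
  have := hfC (A *ᵥ Pi.single j 1) ⟨_, Pi.single_nonneg.2 zero_le_one, rfl⟩
  rwa [hf, dotProduct_mulVec, dotProduct_single, mul_one] at this

theorem Matrix.exists_nonneg_vecMul_nonneg_dotProduct_neg [DecidableEq m] (A : Matrix m n ℝ)
    {b : m → ℝ} (hb : ¬∃ x, 0 ≤ x ∧ A *ᵥ x ≤ b) : ∃ y, 0 ≤ y ∧ 0 ≤ y ᵥ* A ∧ y ⬝ᵥ b < 0 := by
  obtain ⟨y, hy, hyb⟩ := (fromCols A (1 : Matrix m m ℝ)).exists_vecMul_nonneg_dotProduct_neg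
    (b := b) fun z hz hzb => hb ⟨z ∘ Sum.inl, fun j => hz _, fun i => by
      rw [fromCols_mulVec, one_mulVec] at hzb
      have hi := congrFun hzb i
      have hzi : 0 ≤ z (Sum.inr i) := hz _
      simp only [Pi.add_apply, Function.comp_apply] at hi
      linarith⟩
  rw [vecMul_fromCols, vecMul_one, Sum.nonneg_elim_iff] at hy
  exact ⟨y, hy.2, hy.1, hyb⟩

end Farkas

section LinearProgramming

variable {m n : Type*} [Fintype n] {A : Matrix m n ℝ} {b : m → ℝ} {w : n → ℝ}

theorem Matrix.dotProduct_nonpos_of_recession_s3 {x₀ μ : n → ℝ} (hx₀ : 0 ≤ x₀)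
    (hAx₀ : A *ᵥ x₀ ≤ b) (hμ : 0 ≤ μ) (hAμ : A *ᵥ μ ≤ 0) {C : ℝ}
    (hC : ∀ x, 0 ≤ x → A *ᵥ x ≤ b → w ⬝ᵥ x ≤ C) : w ⬝ᵥ μ ≤ 0 := by
  by_contra! hpos
  set τ := (C - w ⬝ᵥ x₀) / (w ⬝ᵥ μ) + 1
  have hτ : 0 ≤ τ := add_nonneg (div_nonneg (sub_nonneg.2 (hC x₀ hx₀ hAx₀)) hpos.le) zero_le_one
  have hfeas : A *ᵥ (x₀ + τ • μ) ≤ b := by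
    rw [mulVec_add, mulVec_smul, ← add_zero b]
    exact add_le_add hAx₀ (smul_nonpos_of_nonneg_of_nonpos hτ hAμ)
  have hbound := hC _ (add_nonneg hx₀ (smul_nonneg hτ hμ)) hfeas
  have hτμ : τ * (w ⬝ᵥ μ) = C - w ⬝ᵥ x₀ + w ⬝ᵥ μ := by
    simp only [τ]
    field_simp
  rw [dotProduct_add, dotProduct_smul, smul_eq_mul, hτμ] at hbound
  linarith

variable [Fintype m]

theorem Matrix.weak_duality {x : n → ℝ} {π : m → ℝ} (hx : 0 ≤ x) (hπ : 0 ≤ π)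
    (hAx : A *ᵥ x ≤ b) (hAπ : w ≤ Aᵀ *ᵥ π) : w ⬝ᵥ x ≤ b ⬝ᵥ π :=
  calc w ⬝ᵥ x ≤ (Aᵀ *ᵥ π) ⬝ᵥ x := dotProduct_le_dotProduct_of_nonneg_right hAπ hx
    _ = π ⬝ᵥ A *ᵥ x := by rw [mulVec_transpose, dotProduct_mulVec]
    _ ≤ π ⬝ᵥ b := dotProduct_le_dotProduct_of_nonneg_left hAx hπ
    _ = b ⬝ᵥ π := dotProduct_comm π b

theorem Matrix.exists_certificate_of_not_exists_optimal_pair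
    (h : ¬∃ x π, 0 ≤ x ∧ 0 ≤ π ∧ A *ᵥ x ≤ b ∧ w ≤ Aᵀ *ᵥ π ∧ b ⬝ᵥ π ≤ w ⬝ᵥ x) :
    ∃ ν μ, ∃ t : ℝ, 0 ≤ ν ∧ 0 ≤ μ ∧ 0 ≤ t ∧ t • w ≤ Aᵀ *ᵥ ν ∧ A *ᵥ μ ≤ t • b ∧
      b ⬝ᵥ ν < w ⬝ᵥ μ := by
  classical
  -- the system `A x ≤ b`, `-Aᵀ π ≤ -w`, `b ⬝ᵥ π - w ⬝ᵥ x ≤ 0` in the unknown `(x, π) ≥ 0`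
  let M : Matrix ((m ⊕ n) ⊕ Unit) (n ⊕ m) ℝ :=
    fromRows (fromBlocks A 0 0 (-Aᵀ)) (replicateRow Unit (Sum.elim (-w) b))
  obtain ⟨u, hu, huM, hub⟩ := M.exists_nonneg_vecMul_nonneg_dotProduct_neg
    (b := Sum.elim (Sum.elim b (-w)) 0) <| by
    rintro ⟨z, hz, hMz⟩
    obtain ⟨x, π, rfl⟩ : ∃ x π, z = Sum.elim x π := ⟨_, _, (Sum.elim_comp_inl_inr z).symm⟩
    simp only [M, fromRows_mulVec, fromBlocks_mulVec, Sum.elim_comp_inl, Sum.elim_comp_inr,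
      zero_mulVec, add_zero, zero_add, replicateRow_mulVec_eq_const, sumElim_dotProduct_sumElim,
      Sum.elim_le_elim_iff, neg_mulVec, neg_le_neg_iff, Sum.nonneg_elim_iff] at hz hMz
    have hobj : -w ⬝ᵥ x + b ⬝ᵥ π ≤ 0 := hMz.2 ()
    rw [neg_dotProduct] at hobj
    exact h ⟨x, π, hz.1, hz.2, hMz.1.1, hMz.1.2, by linarith⟩
  obtain ⟨ν, μ, t, rfl⟩ : ∃ ν μ t, u = Sum.elim (Sum.elim ν μ) (Function.const Unit t) :=
    ⟨_, _, u (.inr ()), by ext ((i | j) | ⟨⟩) <;> rfl⟩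
  simp only [Sum.nonneg_elim_iff, sumElim_dotProduct_sumElim, dotProduct_zero, add_zero,
    dotProduct_neg] at hu hub
  refine ⟨ν, μ, t, hu.1.1, hu.1.2, hu.2 (), fun j => ?_, fun i => ?_, ?_⟩
  · simpa [M, vecMul, dotProduct, replicateRow, mulVec_transpose] using huM (.inl j)
  · simpa [M, vecMul, mulVec, dotProduct, replicateRow, mul_comm] using huM (.inr i)
  · rw [dotProduct_comm, dotProduct_comm w]
    linarith

theorem Matrix.strong_duality {x₀ : n → ℝ} (hx₀ : 0 ≤ x₀) (hAx₀ : A *ᵥ x₀ ≤ b) {C : ℝ}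
    (hC : ∀ x, 0 ≤ x → A *ᵥ x ≤ b → w ⬝ᵥ x ≤ C) :
    ∃ x π, 0 ≤ x ∧ 0 ≤ π ∧ A *ᵥ x ≤ b ∧ w ≤ Aᵀ *ᵥ π ∧ b ⬝ᵥ π ≤ w ⬝ᵥ x := by
  by_contra h
  obtain ⟨ν, μ, t, hν, hμ, ht, hAν, hAμ, hbν⟩ := exists_certificate_of_not_exists_optimal_pair h
  rcases ht.eq_or_lt with rfl | ht
  · have hbν_nonneg : 0 ≤ b ⬝ᵥ ν := by
      simpa using weak_duality (w := 0) hx₀ hν hAx₀ (by simpa using hAν)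
    have hwμ_nonpos := dotProduct_nonpos_of_recession_s3 hx₀ hAx₀ hμ (by simpa using hAμ) hC
    linarith
  · have ht' : 0 ≤ t⁻¹ := inv_nonneg.2 ht.le
    have hscaled := weak_duality (A := A) (b := b) (w := w) (x := t⁻¹ • μ) (π := t⁻¹ • ν)
      (smul_nonneg ht' hμ) (smul_nonneg ht' hν)
      (by simpa [mulVec_smul, smul_smul, ht.ne'] using smul_le_smul_of_nonneg_left hAμ ht')
      (by simpa [mulVec_smul, smul_smul, ht.ne'] using smul_le_smul_of_nonneg_left hAν ht')
    rw [dotProduct_smul, dotProduct_smul, smul_eq_mul, smul_eq_mul,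
      mul_le_mul_iff_of_pos_left (inv_pos.2 ht)] at hscaled
    linarith

theorem Matrix.complementary_slackness {x : n → ℝ} {π : m → ℝ} (hx : 0 ≤ x) (hπ : 0 ≤ π)
    (hAx : A *ᵥ x ≤ b) (hAπ : w ≤ Aᵀ *ᵥ π) (hopt : b ⬝ᵥ π ≤ w ⬝ᵥ x) :
    (∀ i, x i * ((Aᵀ *ᵥ π) i - w i) = 0) ∧ ∀ k, π k * (b k - (A *ᵥ x) k) = 0 := by
  have hdual_slack : 0 ≤ x ⬝ᵥ (Aᵀ *ᵥ π - w) := dotProduct_nonneg_of_nonneg hx (sub_nonneg.2 hAπ)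
  have hprimal_slack : 0 ≤ π ⬝ᵥ (b - A *ᵥ x) := dotProduct_nonneg_of_nonneg hπ (sub_nonneg.2 hAx)
  have hsum : x ⬝ᵥ (Aᵀ *ᵥ π - w) + π ⬝ᵥ (b - A *ᵥ x) = b ⬝ᵥ π - w ⬝ᵥ x := by
    rw [dotProduct_sub, dotProduct_sub, mulVec_transpose, dotProduct_comm x (π ᵥ* A),
      ← dotProduct_mulVec, dotProduct_comm x w, dotProduct_comm π b]
    ring
  exact ⟨mul_eq_zero_of_dotProduct_eq_zero (w := Aᵀ *ᵥ π - w) hx (sub_nonneg.2 hAπ) (by linarith),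
    mul_eq_zero_of_dotProduct_eq_zero (w := b - A *ᵥ x) hπ (sub_nonneg.2 hAx) (by linarith)⟩

end LinearProgramming

theorem exists_kktCond_le_of_mem_IRset {mR mZ nR nZ nU nL : ℕ}
    {A_R : Matrix (Fin nU) (Fin mR) ℝ} {A_Z : Matrix (Fin nU) (Fin mZ) ℝ}
    {B_R : Matrix (Fin nU) (Fin nR) ℝ} {B_Z : Matrix (Fin nU) (Fin nZ) ℝ}
    {Q_R : Matrix (Fin nL) (Fin mR) ℝ} {Q_Z : Matrix (Fin nL) (Fin mZ) ℝ}
    {P_R : Matrix (Fin nL) (Fin nR) ℝ} {P_Z : Matrix (Fin nL) (Fin nZ) ℝ}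
    {w_R : Fin nR → ℝ} {w_Z : Fin nZ → ℝ} {r : Fin nU → ℝ} {s : Fin nL → ℝ}
    {p : (Fin mR → ℝ) × (Fin mZ → ℤ) × (Fin nR → ℝ) × (Fin nZ → ℤ)}
    (hp : p ∈ IRset A_R A_Z B_R B_Z Q_R Q_Z P_R P_Z w_R w_Z r s)
    {y : Fin nZ → ℤ} (hproj : ProjMem Q_R Q_Z P_R P_Z s p.1 p.2.1 y) :
    ∃ (x : Fin nR → ℝ) (π : Fin nL → ℝ),
      KKTcond Q_R Q_Z P_R P_Z w_R s p.1 p.2.1 y x π ∧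
      w_R ⬝ᵥ x + w_Z ⬝ᵥ cRv y ≤ w_R ⬝ᵥ p.2.2.1 + w_Z ⬝ᵥ cRv p.2.2.2 := by
  obtain ⟨-, -, hopt⟩ := hp
  obtain ⟨-, -, hy, x₀, hx₀, hx₀b⟩ := hproj
  set b := s - Q_R *ᵥ p.1 - Q_Z *ᵥ cRv p.2.1 - P_Z *ᵥ cRv y
  have mem_lowerFeas (x : Fin nR → ℝ) (hx : 0 ≤ x) (hxb : P_R *ᵥ x ≤ b) :
      (x, y) ∈ LowerFeas Q_R Q_Z P_R P_Z s p.1 p.2.1 :=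
    ⟨hx, hy, le_sub_iff_add_le.1 hxb⟩
  have hAx₀ : P_R *ᵥ x₀ ≤ b := fun k => by
    have hk := hx₀b k
    simp only [b, Pi.add_apply, Pi.sub_apply] at hk ⊢
    linarith
  obtain ⟨x, π, hx, hπ, hAx, hAπ, hopt_dual⟩ := Matrix.strong_duality hx₀ hAx₀
    (C := w_R ⬝ᵥ p.2.2.1 + w_Z ⬝ᵥ cRv p.2.2.2 - w_Z ⬝ᵥ cRv y) fun x hx hxb => by
      linarith [hopt _ (mem_lowerFeas x hx hxb)]
  exact ⟨x, π, ⟨hx, hπ, hAx, hAπ, Matrix.complementary_slackness hx hπ hAx hAπ hopt_dual⟩,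
    hopt _ (mem_lowerFeas x hx hAx)⟩

/-- every point of the inducible region satisfies the guarded KKT
constraints for every admissible lower-level integer vector; hence if IR is
nonempty, the master feasible set F(Y') is nonempty for every set Y' of
nonnegative lower-level integer vectors. -/
theorem stmt_3
    (mR mZ nR nZ nU nL : ℕ)
    (A_R : Matrix (Fin nU) (Fin mR) ℝ) (A_Z : Matrix (Fin nU) (Fin mZ) ℝ)
    (B_R : Matrix (Fin nU) (Fin nR) ℝ) (B_Z : Matrix (Fin nU) (Fin nZ) ℝ)
    (Q_R : Matrix (Fin nL) (Fin mR) ℝ) (Q_Z : Matrix (Fin nL) (Fin mZ) ℝ)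
    (P_R : Matrix (Fin nL) (Fin nR) ℝ) (P_Z : Matrix (Fin nL) (Fin nZ) ℝ)
    (w_R : Fin nR → ℝ) (w_Z : Fin nZ → ℝ) (r : Fin nU → ℝ) (s : Fin nL → ℝ) :
    (∀ p ∈ IRset A_R A_Z B_R B_Z Q_R Q_Z P_R P_Z w_R w_Z r s,
      ∀ y : Fin nZ → ℤ, 0 ≤ y → ProjMem Q_R Q_Z P_R P_Z s p.1 p.2.1 y →
        ∃ (x : Fin nR → ℝ) (π : Fin nL → ℝ),
          KKTcond Q_R Q_Z P_R P_Z w_R s p.1 p.2.1 y x π ∧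
          w_R ⬝ᵥ x + w_Z ⬝ᵥ cRv y ≤ w_R ⬝ᵥ p.2.2.1 + w_Z ⬝ᵥ cRv p.2.2.2) ∧
    ((IRset A_R A_Z B_R B_Z Q_R Q_Z P_R P_Z w_R w_Z r s).Nonempty →
      ∀ Y' : Set (Fin nZ → ℤ), (∀ y ∈ Y', 0 ≤ y) →
        (MasterFeas A_R A_Z B_R B_Z Q_R Q_Z P_R P_Z w_R w_Z r s Y').Nonempty) := by
  refine ⟨fun p hp y _ hproj => exists_kktCond_le_of_mem_IRset hp hproj, ?_⟩
  rintro ⟨p, hp⟩ Y' -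
  exact ⟨p, hp.1, fun y _ hproj => exists_kktCond_le_of_mem_IRset hp hproj⟩
end
end

section
/- Fix the MIBLP data as in the context (key inequality in the proof of Theorem 2, feasible case). Let (x^u, y^u) be a nonnegative upper-level pair, let θ be the supremum of w_R·x + w_Z·y over Ω_{(x^u,y^u)}, and suppose θ is attained at some (x̂, ŷ) ∈ Ω_{(x^u,y^u)}. Suppose (x^u, y^u, x^{l0}, y^{l0}) satisfies the upper-level constraints A_R x^u + A_Z y^u + B_R x^{l0} + B_Z y^{l0} ≤ r and Q_R x^u + Q_Z y^u + P_R x^{l0} + P_Z y^{l0} ≤ s with x^{l0} ≥ 0 and y^{l0} a nonnegative integer vector, and that there exists a pair (x, π) satisfying the KKT conditions for the inner LP at (x^u, y^u, ŷ) together with w_R·x^{l0} + w_Z·y^{l0} ≥ w_R·x + w_Z·ŷ. Then (x^{l0}, y^{l0}) is feasible to the second subproblem (P7) at (x^u, y^u), i.e. (x^{l0}, y^{l0}) ∈ Ω_{(x^u,y^u)}, B_R x^{l0} + B_Z y^{l0} ≤ r − A_R x^u − A_Z y^u, and w_R·x^{l0} + w_Z·y^{l0} ≥ θ; consequently d_R·x^{l0}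 + d_Z·y^{l0} is greater than or equal to the infimum of d_R·x + d_Z·y over the (P7) feasible set at (x^u, y^u). -/
open Matrix

noncomputable section

variable {mR mZ nR nZ nU nL : ℕ}

/-- key inequality in the proof of Theorem 2, feasible case:
under the guarded KKT constraint at the optimal lower-level integer part ŷ,
the point (x^{l0}, y^{l0}) is feasible to the second subproblem (P7), whence
its d-value dominates the (P7) optimal value. -/
theorem stmt_5
    (mR mZ nR nZ nU nL : ℕ)
    (A_R : Matrix (Fin nU) (Fin mR) ℝ) (A_Z : Matrix (Fin nU) (Fin mZ) ℝ)
    (B_R : Matrix (Fin nU) (Fin nR) ℝ) (B_Z : Matrix (Fin nU) (Fin nZ) ℝ)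
    (Q_R : Matrix (Fin nL) (Fin mR) ℝ) (Q_Z : Matrix (Fin nL) (Fin mZ) ℝ)
    (P_R : Matrix (Fin nL) (Fin nR) ℝ) (P_Z : Matrix (Fin nL) (Fin nZ) ℝ)
    (d_R : Fin nR → ℝ) (d_Z : Fin nZ → ℝ)
    (w_R : Fin nR → ℝ) (w_Z : Fin nZ → ℝ) (r : Fin nU → ℝ) (s : Fin nL → ℝ)
    (xu : Fin mR → ℝ) (yu : Fin mZ → ℤ) (hxu : 0 ≤ xu) (hyu : 0 ≤ yu)
    (θ : ℝ) (xhat : Fin nR → ℝ) (yhat : Fin nZ → ℤ)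
    (hhat : (xhat, yhat) ∈ LowerFeas Q_R Q_Z P_R P_Z s xu yu)
    (hub : ∀ q ∈ LowerFeas Q_R Q_Z P_R P_Z s xu yu,
      w_R ⬝ᵥ q.1 + w_Z ⬝ᵥ cRv q.2 ≤ θ)
    (hatt : w_R ⬝ᵥ xhat + w_Z ⬝ᵥ cRv yhat = θ)
    (xl0 : Fin nR → ℝ) (yl0 : Fin nZ → ℤ) (hxl0 : 0 ≤ xl0) (hyl0 : 0 ≤ yl0)
    (hup1 : A_R *ᵥ xu + A_Z *ᵥ cRv yu + B_R *ᵥ xl0 + B_Z *ᵥ cRv yl0 ≤ r)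
    (hup2 : Q_R *ᵥ xu + Q_Z *ᵥ cRv yu + P_R *ᵥ xl0 + P_Z *ᵥ cRv yl0 ≤ s)
    (hkkt : ∃ (x : Fin nR → ℝ) (π : Fin nL → ℝ),
      KKTcond Q_R Q_Z P_R P_Z w_R s xu yu yhat x π ∧
      w_R ⬝ᵥ x + w_Z ⬝ᵥ cRv yhat ≤ w_R ⬝ᵥ xl0 + w_Z ⬝ᵥ cRv yl0) :
    (xl0, yl0) ∈ LowerFeas Q_R Q_Z P_R P_Z s xu yu ∧
    B_R *ᵥ xl0 + B_Z *ᵥ cRv yl0 ≤ r - A_R *ᵥ xu - A_Z *ᵥ cRv yu ∧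
    θ ≤ w_R ⬝ᵥ xl0 + w_Z ⬝ᵥ cRv yl0 ∧
    sInf {v : EReal | ∃ q ∈ LowerFeas Q_R Q_Z P_R P_Z s xu yu,
        B_R *ᵥ q.1 + B_Z *ᵥ cRv q.2 ≤ r - A_R *ᵥ xu - A_Z *ᵥ cRv yu ∧
        θ ≤ w_R ⬝ᵥ q.1 + w_Z ⬝ᵥ cRv q.2 ∧
        v = ((d_R ⬝ᵥ q.1 + d_Z ⬝ᵥ cRv q.2 : ℝ) : EReal)} ≤
      ((d_R ⬝ᵥ xl0 + d_Z ⬝ᵥ cRv yl0 : ℝ) : EReal) := by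

  obtain ⟨x, π, ⟨hx0, hπ0, hfe, hdual, hcs1, hcs2⟩, hval⟩ := hkkt
  obtain ⟨hxh0, hyh0, hfeas⟩ := hhat
  set b : Fin nL → ℝ := s - Q_R *ᵥ xu - Q_Z *ᵥ cRv yu - P_Z *ᵥ cRv yhat with hb
  -- dot product monotonicity helper
  have dotmono : ∀ {n : ℕ} (u v z : Fin n → ℝ), 0 ≤ z → u ≤ v → u ⬝ᵥ z ≤ v ⬝ᵥ z := by
    intro n u v z hz huv
    apply Finset.sum_le_sum
    intro i _
    exact mul_le_mul_of_nonneg_right (huv i) (hz i)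
  -- (xl0, yl0) ∈ LowerFeas
  have hmem : (xl0, yl0) ∈ LowerFeas Q_R Q_Z P_R P_Z s xu yu := by
    refine ⟨hxl0, hyl0, fun k => ?_⟩
    have := hup2 k
    simp only [Pi.add_apply, Pi.sub_apply] at this ⊢
    linarith
  -- upper-level inequality
  have hB : B_R *ᵥ xl0 + B_Z *ᵥ cRv yl0 ≤ r - A_R *ᵥ xu - A_Z *ᵥ cRv yu := by
    intro k
    have := hup1 k
    simp only [Pi.add_apply, Pi.sub_apply] at this ⊢
    linarith
  -- weak duality chain
  have h1 : w_R ⬝ᵥ xhat ≤ (P_Rᵀ *ᵥ π) ⬝ᵥ xhat := dotmono _ _ _ hxh0 hdual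
  have h2 : (P_Rᵀ *ᵥ π) ⬝ᵥ xhat = π ⬝ᵥ (P_R *ᵥ xhat) := by
    rw [dotProduct_mulVec, ← mulVec_transpose]
  have hPxb : P_R *ᵥ xhat ≤ b := by
    intro k
    have := hfeas k
    simp only [Pi.add_apply, Pi.sub_apply, hb] at this ⊢
    linarith
  have h3 : π ⬝ᵥ (P_R *ᵥ xhat) ≤ π ⬝ᵥ b := by
    rw [dotProduct_comm π (P_R *ᵥ xhat), dotProduct_comm π b]
    exact dotmono _ _ _ hπ0 hPxb
  have h4 : π ⬝ᵥ b = π ⬝ᵥ (P_R *ᵥ x) := by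
    have : π ⬝ᵥ (b - P_R *ᵥ x) = 0 := by
      apply Finset.sum_eq_zero
      intro k _
      exact hcs2 k
    rw [dotProduct_sub] at this
    linarith
  have h5 : π ⬝ᵥ (P_R *ᵥ x) = w_R ⬝ᵥ x := by
    have : x ⬝ᵥ (P_Rᵀ *ᵥ π - w_R) = 0 := by
      apply Finset.sum_eq_zero
      intro i _
      exact hcs1 i
    rw [dotProduct_sub] at this
    rw [dotProduct_mulVec, ← mulVec_transpose]
    rw [dotProduct_comm x (P_Rᵀ *ᵥ π), dotProduct_comm x w_R] at this
    linarith
  have hxhx : w_R ⬝ᵥ xhat ≤ w_R ⬝ᵥ x := by linarith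
  have hθle : θ ≤ w_R ⬝ᵥ xl0 + w_Z ⬝ᵥ cRv yl0 := by
    rw [← hatt]; linarith
  refine ⟨hmem, hB, hθle, ?_⟩
  exact sInf_le ⟨(xl0, yl0), hmem, hB, hθle, rfl⟩
end
end

section
/- Fix the MIBLP data as in the context (infeasibility step in the proof of Theorem 2). Let (x^u, y^u) be a nonnegative upper-level pair, let θ be the supremum of w_R·x + w_Z·y over Ω_{(x^u,y^u)}, attained at some (x̂, ŷ) ∈ Ω_{(x^u,y^u)}, and suppose the second subproblem (P7) at (x^u, y^u) is infeasible, i.e. there is no (x, y) ∈ Ω_{(x^u,y^u)} with B_R x + B_Z y ≤ r − A_R x^u − A_Z y^u and w_R·x + w_Z·y ≥ θ. Then there exist no x^{l0} ∈ ℝ^{nR}, x^{l0} ≥ 0, and nonnegative integer vector y^{l0} ∈ ℤ^{nZ} such that (x^u, y^u, x^{l0}, y^{l0}) satisfies A_R x^u + A_Z y^u + B_R x^{l0} + B_Z y^{l0} ≤ r, Q_R x^u + Q_Z y^u + P_R x^{l0} + P_Z y^{l0} ≤ s, and the guarded constraint for ŷ, namely the existence of a pair (x, π) satisfying the KKT conditions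 for the inner LP at (x^u, y^u, ŷ) with w_R·x^{l0} + w_Z·y^{l0} ≥ w_R·x + w_Z·ŷ. In other words, the master problem with ŷ in its index set has no feasible completion at (x^u, y^u). -/
open Matrix

noncomputable section

variable {mR mZ nR nZ nU nL : ℕ}

/-- infeasibility step in the proof of Theorem 2: if the second
subproblem (P7) at (x^u, y^u) is infeasible, then no (x^{l0}, y^{l0}) can
satisfy the upper-level constraints together with the guarded KKT constraint
generated by the optimal lower-level integer part ŷ. -/
theorem stmt_6
    (mR mZ nR nZ nU nL : ℕ)
    (A_R : Matrix (Fin nU) (Fin mR) ℝ) (A_Z : Matrix (Fin nU) (Fin mZ) ℝ)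
    (B_R : Matrix (Fin nU) (Fin nR) ℝ) (B_Z : Matrix (Fin nU) (Fin nZ) ℝ)
    (Q_R : Matrix (Fin nL) (Fin mR) ℝ) (Q_Z : Matrix (Fin nL) (Fin mZ) ℝ)
    (P_R : Matrix (Fin nL) (Fin nR) ℝ) (P_Z : Matrix (Fin nL) (Fin nZ) ℝ)
    (w_R : Fin nR → ℝ) (w_Z : Fin nZ → ℝ) (r : Fin nU → ℝ) (s : Fin nL → ℝ)
    (xu : Fin mR → ℝ) (yu : Fin mZ → ℤ) (hxu : 0 ≤ xu) (hyu : 0 ≤ yu)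
    (θ : ℝ) (xhat : Fin nR → ℝ) (yhat : Fin nZ → ℤ)
    (hhat : (xhat, yhat) ∈ LowerFeas Q_R Q_Z P_R P_Z s xu yu)
    (hub : ∀ q ∈ LowerFeas Q_R Q_Z P_R P_Z s xu yu,
      w_R ⬝ᵥ q.1 + w_Z ⬝ᵥ cRv q.2 ≤ θ)
    (hatt : w_R ⬝ᵥ xhat + w_Z ⬝ᵥ cRv yhat = θ)
    (hinfeas : ¬ ∃ q ∈ LowerFeas Q_R Q_Z P_R P_Z s xu yu,
      B_R *ᵥ q.1 + B_Z *ᵥ cRv q.2 ≤ r - A_R *ᵥ xu - A_Z *ᵥ cRv yu ∧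
      θ ≤ w_R ⬝ᵥ q.1 + w_Z ⬝ᵥ cRv q.2) :
    ¬ ∃ (xl0 : Fin nR → ℝ) (yl0 : Fin nZ → ℤ), 0 ≤ xl0 ∧ 0 ≤ yl0 ∧
      A_R *ᵥ xu + A_Z *ᵥ cRv yu + B_R *ᵥ xl0 + B_Z *ᵥ cRv yl0 ≤ r ∧
      Q_R *ᵥ xu + Q_Z *ᵥ cRv yu + P_R *ᵥ xl0 + P_Z *ᵥ cRv yl0 ≤ s ∧
      ∃ (x : Fin nR → ℝ) (π : Fin nL → ℝ),
        KKTcond Q_R Q_Z P_R P_Z w_R s xu yu yhat x π ∧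
        w_R ⬝ᵥ x + w_Z ⬝ᵥ cRv yhat ≤ w_R ⬝ᵥ xl0 + w_Z ⬝ᵥ cRv yl0 := by
  rintro ⟨xl0, yl0, hxl0, hyl0, hA, hQ, x, π, ⟨hx0, hπ0, hPx, hdual, hcs1, hcs2⟩, hopt⟩
  set b : Fin nL → ℝ := s - Q_R *ᵥ xu - Q_Z *ᵥ cRv yu - P_Z *ᵥ cRv yhat with hb
  -- x is optimal: w_R ⬝ x = π ⬝ b
  have hxeq : w_R ⬝ᵥ x = π ⬝ᵥ b := by
    have h1 : w_R ⬝ᵥ x = (P_Rᵀ *ᵥ π) ⬝ᵥ x := by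
      unfold dotProduct
      apply Finset.sum_congr rfl
      intro i _
      have := hcs1 i
      nlinarith [hcs1 i]
    have h2 : (P_Rᵀ *ᵥ π) ⬝ᵥ x = π ⬝ᵥ (P_R *ᵥ x) := by
      rw [Matrix.mulVec_transpose, ← Matrix.dotProduct_mulVec]
    have h3 : π ⬝ᵥ (P_R *ᵥ x) = π ⬝ᵥ b := by
      unfold dotProduct
      apply Finset.sum_congr rfl
      intro k _
      nlinarith [hcs2 k]
    rw [h1, h2, h3]
  -- xhat is feasible for the inner LP
  obtain ⟨hxh0, hyh0, hxhfeas⟩ := hhat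
  have hPxhat : P_R *ᵥ xhat ≤ b := by
    intro k
    have := hxhfeas k
    simp only [hb, Pi.add_apply, Pi.sub_apply] at this ⊢
    linarith
  -- weak duality: w_R ⬝ xhat ≤ π ⬝ b
  have hwd : w_R ⬝ᵥ xhat ≤ π ⬝ᵥ b := by
    have h1 : w_R ⬝ᵥ xhat ≤ (P_Rᵀ *ᵥ π) ⬝ᵥ xhat := by
      apply Finset.sum_le_sum
      intro i _
      exact mul_le_mul_of_nonneg_right (hdual i) (hxh0 i)
    have h2 : (P_Rᵀ *ᵥ π) ⬝ᵥ xhat = π ⬝ᵥ (P_R *ᵥ xhat) := by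
      rw [Matrix.mulVec_transpose, ← Matrix.dotProduct_mulVec]
    have h3 : π ⬝ᵥ (P_R *ᵥ xhat) ≤ π ⬝ᵥ b := by
      apply Finset.sum_le_sum
      intro k _
      exact mul_le_mul_of_nonneg_left (hPxhat k) (hπ0 k)
    linarith
  have hxge : w_R ⬝ᵥ xhat ≤ w_R ⬝ᵥ x := by rw [hxeq]; exact hwd
  -- (xl0, yl0) ∈ LowerFeas and contradicts hinfeas
  apply hinfeas
  refine ⟨(xl0, yl0), ⟨hxl0, hyl0, ?_⟩, ?_, ?_⟩
  · intro k
    have := hQ k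
    simp only [Pi.add_apply, Pi.sub_apply] at this ⊢
    linarith
  · intro k
    have := hA k
    simp only [Pi.add_apply, Pi.sub_apply] at this ⊢
    linarith
  · calc θ = w_R ⬝ᵥ xhat + w_Z ⬝ᵥ cRv yhat := hatt.symm
      _ ≤ w_R ⬝ᵥ x + w_Z ⬝ᵥ cRv yhat := by linarith
      _ ≤ w_R ⬝ᵥ xl0 + w_Z ⬝ᵥ cRv yl0 := hopt
end
end

section
/- Consider the single-level problem (Q1) obtained by the naive (unguarded) KKT enumeration of the lower-level integer values y^{l,1} = 1 and y^{l,2} = 0 for problem (Q0): minimize −y^u − y^{l0} over y^u ∈ {0,1}, x^{l0} ≥ 0, y^{l0} ∈ {0,1}, x^{l,1}, π^1, x^{l,2}, π^2 ∈ ℝ, all nonnegative, subject to y^u + x^{l0} − y^{l0} ≤ 0; −x^{l0} − y^{l0} ≥ −x^{l,1} − 1; x^{l,1} ≤ −y^u + 1; π^1 ≥ −1; x^{l,1}·(π^1 + 1) = 0; π^1·(−y^u − x^{l,1} + 1) = 0; −x^{l0} − y^{l0} ≥ −x^{l,2}; x^{l,2} ≤ −y^u; π^2 ≥ −1; x^{l,2}·(π^2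 + 1) = 0; π^2·(−y^u − x^{l,2}) = 0. Then every feasible point of (Q1) has y^u = 0 and y^{l0} = 0, so the least value of −y^u − y^{l0} over the (Q1) feasible set is 0; in particular the bilevel optimal point (y^u, x^{l0}, y^{l0}) = (1, 0, 1) of (Q0), with optimal value −2, is infeasible to (Q1), so the unguarded single-level formulation (P3) is not equivalent to the bilevel problem (Q0). -/
/-- Feasibility for the naive unguarded single-level reformulation (Q1) of
(Q0), with the KKT blocks for the lower-level integer values y^{l,1} = 1 and
y^{l,2} = 0 imposed unconditionally. -/
def Q1Feas (yu xl0 yl0 xl1 pi1 xl2 pi2 : ℝ) : Prop :=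
  (yu = 0 ∨ yu = 1) ∧ 0 ≤ xl0 ∧ (yl0 = 0 ∨ yl0 = 1) ∧
  0 ≤ xl1 ∧ 0 ≤ pi1 ∧ 0 ≤ xl2 ∧ 0 ≤ pi2 ∧
  yu + xl0 - yl0 ≤ 0 ∧
  -xl0 - yl0 ≥ -xl1 - 1 ∧
  xl1 ≤ -yu + 1 ∧
  pi1 ≥ -1 ∧
  xl1 * (pi1 + 1) = 0 ∧
  pi1 * (-yu - xl1 + 1) = 0 ∧
  -xl0 - yl0 ≥ -xl2 ∧
  xl2 ≤ -yu ∧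
  pi2 ≥ -1 ∧
  xl2 * (pi2 + 1) = 0 ∧
  pi2 * (-yu - xl2) = 0

/-- every feasible point of (Q1) has y^u = 0 and y^{l0} = 0, so
the optimal value of (Q1) is 0; in particular the bilevel optimum
(y^u, x^{l0}, y^{l0}) = (1, 0, 1) of (Q0) is infeasible to (Q1), showing that
the unguarded single-level formulation (P3) is not equivalent to (Q0). -/
theorem stmt_11 :
    (∀ yu xl0 yl0 xl1 pi1 xl2 pi2 : ℝ,
      Q1Feas yu xl0 yl0 xl1 pi1 xl2 pi2 → yu = 0 ∧ yl0 = 0) ∧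
    IsLeast {v : ℝ | ∃ yu xl0 yl0 xl1 pi1 xl2 pi2 : ℝ,
      Q1Feas yu xl0 yl0 xl1 pi1 xl2 pi2 ∧ v = -yu - yl0} 0 ∧
    ¬ ∃ xl1 pi1 xl2 pi2 : ℝ, Q1Feas 1 0 1 xl1 pi1 xl2 pi2 := by

  have key : ∀ yu xl0 yl0 xl1 pi1 xl2 pi2 : ℝ,
      Q1Feas yu xl0 yl0 xl1 pi1 xl2 pi2 → yu = 0 ∧ yl0 = 0 := by
    rintro yu xl0 yl0 xl1 pi1 xl2 pi2
      ⟨hyu, hx0, hyl0, hx1, hp1, hx2, hp2, h1, h2, h3, h4, h5, h6, h7, h8, h9, h10, h11⟩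
    rcases hyu with hy | hy
    · constructor
      · exact hy
      · rcases hyl0 with hl | hl
        · exact hl
        · nlinarith
    · exfalso; nlinarith
  refine ⟨key, ⟨⟨0, 0, 0, 0, 0, 0, 0, ?_, by ring⟩, ?_⟩, ?_⟩
  · refine ⟨Or.inl rfl, le_refl 0, Or.inl rfl, le_refl 0, le_refl 0, le_refl 0, le_refl 0, ?_⟩
    norm_num
  · rintro v ⟨yu, xl0, yl0, xl1, pi1, xl2, pi2, hf, hv⟩
    obtain ⟨h0, h1⟩ := key yu xl0 yl0 xl1 pi1 xl2 pi2 hf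
    simp [hv, h0, h1]
  · rintro ⟨xl1, pi1, xl2, pi2, hf⟩
    obtain ⟨h0, h1⟩ := key 1 0 1 xl1 pi1 xl2 pi2 hf
    norm_num at h0
end
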